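/- Let y = Ax + w where x is supported on N ⊆ N_e and A_{N_e} has full column rank with restricted isometry constant δ_{|N_e|} < 1. Let c be the vector supported on N_e with c_{N_e} = (A_{N_e}'A_{N_e})^{-1}A_{N_e}'y. Then ‖c − x‖₂ ≤ ‖w‖₂ / √(1 − δ_{|N_e|}). -/

import Mathlib

open Matrix Finset

noncomputable section

variable {n m : ℕ}

/-- Submatrix of columns of `A` indexed by `S`. -/
def cols (A : Matrix (Fin n) (Fin m) ℝ) (S : Finset (Fin m)) :
    Matrix (Fin n) {j // j ∈ S} ℝ := Matrix.of fun i j => A i j.1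

/-- Subvector of `b` on indices in `S`. -/
def subv (b : Fin m → ℝ) (S : Finset (Fin m)) : {j // j ∈ S} → ℝ := fun j => b j.1

/-- `b` is supported on `S`. -/
def suppOn (b : Fin m → ℝ) (S : Finset (Fin m)) : Prop := ∀ j, j ∉ S → b j = 0

def l2v {k : Type*} [Fintype k] (v : k → ℝ) : ℝ := Real.sqrt (∑ i, v i ^ 2)

def l1v {k : Type*} [Fintype k] (v : k → ℝ) : ℝ := ∑ i, |v i|

def linfv {k : Type*} [Fintype k] (v : k → ℝ) : ℝ := ⨆ i, |v i|

/-- ℓ¹ norm of the subvector of `b` on the complement of `T`. -/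
def l1c (b : Fin m → ℝ) (T : Finset (Fin m)) : ℝ := ∑ j ∈ Tᶜ, |b j|

/-- Induced ℓ∞→ℓ∞ operator norm (max absolute row sum). -/
def matInf {k l : Type*} [Fintype k] [Fintype l] (B : Matrix k l ℝ) : ℝ :=
  ⨆ i, ∑ j, |B i j|

/-- Spectral norm (ℓ²→ℓ² operator norm). -/
def spec {k l : Type*} [Fintype k] [Fintype l] (B : Matrix k l ℝ) : ℝ :=
  sSup ((fun x => l2v (B.mulVec x)) '' {x | l2v x ≤ 1})

/-- The modified-BPDN objective L(b) = (1/2)‖y − Ab‖₂² + γ‖b_{Tᶜ}‖₁. -/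
def objL (A : Matrix (Fin n) (Fin m) ℝ) (y : Fin n → ℝ) (γ : ℝ) (T : Finset (Fin m))
    (b : Fin m → ℝ) : ℝ :=
  (1/2) * (∑ i, (y i - A.mulVec b i) ^ 2) + γ * l1c b T

/-- Orthogonal projector M = I − A_T (A_Tᵀ A_T)⁻¹ A_Tᵀ. -/
def projM (A : Matrix (Fin n) (Fin m) ℝ) (T : Finset (Fin m)) : Matrix (Fin n) (Fin n) ℝ :=
  1 - cols A T * ((cols A T)ᵀ * cols A T)⁻¹ * (cols A T)ᵀ

/-- Least squares coefficients on `S` : (A_Sᵀ A_S)⁻¹ A_Sᵀ y. -/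
def lsq (A : Matrix (Fin n) (Fin m) ℝ) (S : Finset (Fin m)) (y : Fin n → ℝ) :
    {j // j ∈ S} → ℝ :=
  ((cols A S)ᵀ * cols A S)⁻¹.mulVec ((cols A S)ᵀ.mulVec y)

/-- Least squares estimate on `S`, as a vector in ℝᵐ supported on `S`. -/
def lsqFull (A : Matrix (Fin n) (Fin m) ℝ) (S : Finset (Fin m)) (y : Fin n → ℝ) :
    Fin m → ℝ := fun j => if h : j ∈ S then lsq A S y ⟨j, h⟩ else 0

/-- The matrix A_Δᵀ M A_Δ. -/
def schur (A : Matrix (Fin n) (Fin m) ℝ) (T Δ : Finset (Fin m)) :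
    Matrix {j // j ∈ Δ} {j // j ∈ Δ} ℝ :=
  (cols A Δ)ᵀ * projM A T * cols A Δ

/-- The matrix (A_Tᵀ A_T)⁻¹ A_Tᵀ A_Δ (A_Δᵀ M A_Δ)⁻¹. -/
def crossMat (A : Matrix (Fin n) (Fin m) ℝ) (T Δ : Finset (Fin m)) :
    Matrix {j // j ∈ T} {j // j ∈ Δ} ℝ :=
  ((cols A T)ᵀ * cols A T)⁻¹ * ((cols A T)ᵀ * cols A Δ) * (schur A T Δ)⁻¹

/-- The exact-recovery-coefficient quantity ‖(A_Δᵀ M A_Δ)⁻¹ A_Δᵀ M A_ω‖₁. -/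
def erc (A : Matrix (Fin n) (Fin m) ℝ) (T Δ : Finset (Fin m)) (ω : Fin m) : ℝ :=
  l1v ((schur A T Δ)⁻¹.mulVec (((cols A Δ)ᵀ * projM A T).mulVec (fun i => A i ω)))

/-- `δ` is a valid S-restricted isometry constant for `A`. -/
def RIP (A : Matrix (Fin n) (Fin m) ℝ) (S : ℕ) (δ : ℝ) : Prop :=
  0 ≤ δ ∧ ∀ (J : Finset (Fin m)), J.card ≤ S → ∀ x : Fin m → ℝ, suppOn x J →
    (1 - δ) * (∑ i, x i ^ 2) ≤ (∑ i, (A.mulVec x i) ^ 2) ∧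
    (∑ i, (A.mulVec x i) ^ 2) ≤ (1 + δ) * (∑ i, x i ^ 2)

/-- `θ` is a valid (S,S')-restricted orthogonality constant for `A`. -/
def ROC (A : Matrix (Fin n) (Fin m) ℝ) (S S' : ℕ) (θ : ℝ) : Prop :=
  0 ≤ θ ∧ ∀ (J J' : Finset (Fin m)), Disjoint J J' → J.card ≤ S → J'.card ≤ S' →
    ∀ x x' : Fin m → ℝ, suppOn x J → suppOn x' J' →
      |dotProduct (A.mulVec x) (A.mulVec x')| ≤ θ * l2v x * l2v x'

/-- `b` minimizes the modified-BPDN objective over vectors supported on `S`. -/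
def IsRestrMin (A : Matrix (Fin n) (Fin m) ℝ) (y : Fin n → ℝ) (γ : ℝ)
    (T S : Finset (Fin m)) (b : Fin m → ℝ) : Prop :=
  suppOn b S ∧ ∀ b', suppOn b' S → objL A y γ T b ≤ objL A y γ T b'

/-- `g` is a subgradient of `b ↦ ‖b_{Tᶜ}‖₁` at `b`. -/
def IsSubgrad (T : Finset (Fin m)) (b g : Fin m → ℝ) : Prop :=
  (∀ j, j ∈ T → g j = 0) ∧
  ∀ j, j ∉ T → |g j| ≤ 1 ∧ (b j ≠ 0 → g j = Real.sign (b j))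

/-! The error `e = c − x` is supported on `N_e`, and the normal equations give
`A_{N_e}ᵀ A e = A_{N_e}ᵀ w`. Hence `‖A e‖² = ⟪A e, w⟫ ≤ ‖A e‖ ‖w‖`, so `‖A e‖ ≤ ‖w‖`, and the
lower restricted isometry bound `(1 − δ) ‖e‖² ≤ ‖A e‖²` finishes the proof. -/

lemma suppOn.mono {b : Fin m → ℝ} {S T : Finset (Fin m)} (hb : suppOn b S) (hST : S ⊆ T) :
    suppOn b T :=
  fun j hj => hb j fun hjS => hj (hST hjS)

lemma suppOn.sub {b b' : Fin m → ℝ} {S : Finset (Fin m)} (hb : suppOn b S)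
    (hb' : suppOn b' S) : suppOn (b - b') S := by
  intro j hj
  simp [hb j hj, hb' j hj]

lemma mulVec_eq_cols_mulVec_subv (A : Matrix (Fin n) (Fin m) ℝ) {S : Finset (Fin m)}
    {b : Fin m → ℝ} (hb : suppOn b S) : A *ᵥ b = cols A S *ᵥ subv b S := by
  funext i
  simp only [mulVec, dotProduct, cols, subv, of_apply]
  rw [← Finset.sum_subset (subset_univ S) fun j _ hj => by rw [hb j hj, mul_zero],
    Finset.sum_subtype S (fun _ => Iff.rfl) fun j => A i j * b j]

lemma suppOn_lsqFull (A : Matrix (Fin n) (Fin m) ℝ) (S : Finset (Fin m)) (y : Fin n → ℝ) :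
    suppOn (lsqFull A S y) S :=
  fun j hj => by simp [lsqFull, hj]

lemma subv_lsqFull (A : Matrix (Fin n) (Fin m) ℝ) (S : Finset (Fin m)) (y : Fin n → ℝ) :
    subv (lsqFull A S y) S = lsq A S y := by
  funext j
  simp [subv, lsqFull, j.2]

lemma transpose_cols_mulVec_lsq {A : Matrix (Fin n) (Fin m) ℝ} {S : Finset (Fin m)}
    (hrank : IsUnit ((cols A S)ᵀ * cols A S)) (y : Fin n → ℝ) :
    (cols A S)ᵀ *ᵥ (cols A S *ᵥ lsq A S y) = (cols A S)ᵀ *ᵥ y := by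
  rw [lsq, mulVec_mulVec, mulVec_mulVec, mul_nonsing_inv _ ((isUnit_iff_isUnit_det _).mp hrank),
    one_mulVec]

lemma transpose_cols_mulVec_lsqFull_sub {A : Matrix (Fin n) (Fin m) ℝ} {S : Finset (Fin m)}
    (hrank : IsUnit ((cols A S)ᵀ * cols A S)) (x : Fin m → ℝ) (w : Fin n → ℝ) :
    (cols A S)ᵀ *ᵥ (A *ᵥ (lsqFull A S (A *ᵥ x + w) - x)) = (cols A S)ᵀ *ᵥ w := by
  rw [mulVec_sub, mulVec_eq_cols_mulVec_subv A (suppOn_lsqFull A S _), subv_lsqFull, mulVec_sub,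
    transpose_cols_mulVec_lsq hrank, mulVec_add]
  abel

lemma sum_sq_le_of_dotProduct_self_eq {k : Type*} [Fintype k] {u w : k → ℝ}
    (h : u ⬝ᵥ u = u ⬝ᵥ w) : ∑ i, u i ^ 2 ≤ ∑ i, w i ^ 2 := by
  have hu : u ⬝ᵥ u = ∑ i, u i ^ 2 := by simp only [dotProduct, sq]
  have hcs : (u ⬝ᵥ w) ^ 2 ≤ (∑ i, u i ^ 2) * ∑ i, w i ^ 2 :=
    Finset.sum_mul_sq_le_sq_mul_sq univ u w
  have hu0 : 0 ≤ ∑ i, u i ^ 2 := by positivity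
  rw [← h, hu, sq] at hcs
  rcases hu0.eq_or_lt with h0 | h0
  · rw [← h0]
    positivity
  · exact le_of_mul_le_mul_left hcs h0

lemma sum_sq_mulVec_le_of_transpose_mulVec_eq {k l : Type*} [Fintype k] [Fintype l]
    (B : Matrix k l ℝ) (z : l → ℝ) {w : k → ℝ} (h : Bᵀ *ᵥ (B *ᵥ z) = Bᵀ *ᵥ w) :
    ∑ i, (B *ᵥ z) i ^ 2 ≤ ∑ i, w i ^ 2 := by
  refine sum_sq_le_of_dotProduct_self_eq ?_
  rw [dotProduct_comm, dotProduct_mulVec, ← mulVec_transpose, h, mulVec_transpose,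
    ← dotProduct_mulVec, dotProduct_comm]

lemma sum_sq_mulVec_lsqFull_sub_le {A : Matrix (Fin n) (Fin m) ℝ} {S : Finset (Fin m)}
    (hrank : IsUnit ((cols A S)ᵀ * cols A S)) {x : Fin m → ℝ} (hx : suppOn x S)
    (w : Fin n → ℝ) :
    ∑ i, (A *ᵥ (lsqFull A S (A *ᵥ x + w) - x)) i ^ 2 ≤ ∑ i, w i ^ 2 := by
  have he := (suppOn_lsqFull A S (A *ᵥ x + w)).sub hx
  have hnormal := transpose_cols_mulVec_lsqFull_sub hrank x w
  rw [mulVec_eq_cols_mulVec_subv A he] at hnormal ⊢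
  exact sum_sq_mulVec_le_of_transpose_mulVec_eq _ _ hnormal

lemma l2v_le_div_sqrt {k l : Type*} [Fintype k] [Fintype l] {v : k → ℝ} {w : l → ℝ} {a : ℝ}
    (ha : 0 < a) (h : a * ∑ i, v i ^ 2 ≤ ∑ i, w i ^ 2) : l2v v ≤ l2v w / Real.sqrt a := by
  rw [l2v, l2v, ← Real.sqrt_div' _ ha.le]
  exact Real.sqrt_le_sqrt ((le_div_iff₀' ha).mpr h)

/-- ℓ² bound on the genie-aided least squares error ‖c − x‖₂. -/
theorem stmt8 (n m : ℕ) (A : Matrix (Fin n) (Fin m) ℝ) (N Ne : Finset (Fin m))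
    (hNNe : N ⊆ Ne) (hrank : IsUnit ((cols A Ne)ᵀ * cols A Ne))
    (δ : ℝ) (hδ : RIP A Ne.card δ) (hδ1 : δ < 1)
    (x : Fin m → ℝ) (hx : suppOn x N) (y : Fin n → ℝ)
    (wn : Fin n → ℝ) (hy : y = A.mulVec x + wn) :
    l2v (lsqFull A Ne y - x) ≤ l2v wn / Real.sqrt (1 - δ) := by
  subst hy
  have hxNe : suppOn x Ne := hx.mono hNNe
  have he : suppOn (lsqFull A Ne (A *ᵥ x + wn) - x) Ne := (suppOn_lsqFull A Ne _).sub hxNe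
  refine l2v_le_div_sqrt (by linarith) ?_
  exact (hδ.2 Ne le_rfl _ he).1.trans (sum_sq_mulVec_lsqFull_sub_le hrank hxNe wn)
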